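/- arXiv:2503.05276 — 3 statements merged into one kernel-verified Lean document; each statement's English description precedes it below -/
import Mathlib

section
/- Power-of-two feasibility of cyclic schedules: Let n customers have replenishment intervals that are powers of two, t_i = 2^{k_i} for k : Fin n → ℕ, and let q be a natural number (the vehicle fleet size). If the total average vehicle usage satisfies ∑_{i} 1/2^{k_i} ≤ q (as rational numbers), then there exists a choice of offsets o : Fin n → ℕ such that for every period m ∈ ℕ, the number of customers i with m ≡ o_i (mod 2^{k_i}) is at most q. In other words, Constraint (26) with power-of-two intervals guarantees the existence of a cyclic replenishment schedule that never dispatches more than q vehicles in any single period. -/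
private lemma po2_count_mod (T d r : ℕ) (hd : 0 < d) (hr : r < d) (hdT : d ∣ T) :
    ((Finset.range T).filter (fun m => m % d = r)).card = T / d := by
  rw [← Finset.card_range (T / d)]
  apply Finset.card_bij' (fun m _ => m / d) (fun j _ => j * d + r)
  · intro m hm
    simp only [Finset.mem_filter, Finset.mem_range] at hm
    exact Finset.mem_range.2 (Nat.div_lt_div_of_lt_of_dvd hdT hm.1)
  · intro j hj
    simp only [Finset.mem_range] at hj
    simp only [Finset.mem_filter, Finset.mem_range]
    refine ⟨?_, ?_⟩
    · calc j * d + r < j * d + d := by omega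
        _ = (j+1) * d := by ring
        _ ≤ (T/d) * d := Nat.mul_le_mul_right d hj
        _ = T := Nat.div_mul_cancel hdT
    · rw [show j * d + r = d * j + r by ring, Nat.mul_add_mod]; exact Nat.mod_eq_of_lt hr
  · intro m hm
    simp only [Finset.mem_filter, Finset.mem_range] at hm
    conv_rhs => rw [← Nat.div_add_mod m d]
    rw [hm.2]; ring
  · intro j hj
    rw [show j * d + r = d * j + r by ring, Nat.mul_add_div hd, Nat.div_eq_of_lt hr]; omega

/-- Power-of-two feasibility of cyclic schedules: if `n` customers have
power-of-two replenishment intervals `2 ^ k i` and the total average vehicle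
usage `∑ i, 1 / 2 ^ k i` is at most the fleet size `q` (as rationals), then
there exist offsets `o` such that in every period `m` the number of customers
served (those with `m ≡ o i [MOD 2 ^ k i]`) is at most `q`. -/
theorem po2_feasibility (n q : ℕ) (k : Fin n → ℕ)
    (h : ∑ i : Fin n, (1 : ℚ) / 2 ^ k i ≤ (q : ℚ)) :
    ∃ o : Fin n → ℕ, ∀ m : ℕ,
      (Finset.univ.filter (fun i : Fin n => m % 2 ^ k i = o i % 2 ^ k i)).card ≤ q := by
  induction n with
  | zero => exact ⟨fun _ => 0, fun m => by simp⟩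
  | succ n ih =>
    obtain ⟨i₀, -, hmax⟩ := Finset.exists_max_image Finset.univ k ⟨0, Finset.mem_univ 0⟩
    set K := k i₀ with hK
    set k' : Fin n → ℕ := fun j => k (i₀.succAbove j) with hk'
    have hk'le : ∀ j, k' j ≤ K := fun j => hmax _ (Finset.mem_univ _)
    rw [Fin.sum_univ_succAbove (fun i => (1 : ℚ) / 2 ^ k i) i₀] at h
    have hsum' : ∑ j : Fin n, (1 : ℚ) / 2 ^ k' j ≤ (q : ℚ) := by
      have hpos : (0:ℚ) < 1 / 2 ^ K := by positivity
      simp only [hk']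
      linarith [h]
    obtain ⟨o', ho'⟩ := ih k' hsum'
    -- key natural-number inequality
    have hnat : (∑ j : Fin n, 2 ^ (K - k' j)) + 1 ≤ q * 2 ^ K := by
      have hcast : ((∑ j : Fin n, 2 ^ (K - k' j) : ℕ) : ℚ) + 1 ≤ (q : ℚ) * 2 ^ K := by
        push_cast
        have he : ∀ j : Fin n, (2:ℚ) ^ (K - k' j) = (1 / 2 ^ k' j) * 2 ^ K := by
          intro j
          rw [div_mul_eq_mul_div, one_mul, eq_div_iff (by positivity), ← pow_add]
          congr 1
          have := hk'le j
          omega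
        calc (∑ j : Fin n, (2:ℚ) ^ (K - k' j)) + 1
            = (∑ j : Fin n, (1 : ℚ) / 2 ^ k' j) * 2 ^ K + (1 / 2 ^ K) * 2 ^ K := by
              rw [Finset.sum_mul, one_div, inv_mul_cancel₀ (by positivity)]
              congr 1
              exact Finset.sum_congr rfl fun j _ => he j
          _ = (1 / 2 ^ K + ∑ j : Fin n, (1 : ℚ) / 2 ^ k' j) * 2 ^ K := by ring
          _ ≤ (q : ℚ) * 2 ^ K := by
              apply mul_le_mul_of_nonneg_right _ (by positivity)
              exact h
      exact_mod_cast hcast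
    -- sum of loads over one full period
    have hload : ∑ m ∈ Finset.range (2 ^ K),
        (Finset.univ.filter (fun j : Fin n => m % 2 ^ k' j = o' j % 2 ^ k' j)).card
        = ∑ j : Fin n, 2 ^ (K - k' j) := by
      simp only [Finset.card_filter]
      rw [Finset.sum_comm]
      refine Finset.sum_congr rfl fun j _ => ?_
      rw [← Finset.card_filter]
      rw [po2_count_mod (2 ^ K) (2 ^ k' j) (o' j % 2 ^ k' j) (by positivity)
        (Nat.mod_lt _ (by positivity)) (pow_dvd_pow 2 (hk'le j))]
      rw [Nat.pow_div (hk'le j) (by norm_num)]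
    -- find a good offset for customer i₀
    have hlt : ∑ m ∈ Finset.range (2 ^ K),
        (Finset.univ.filter (fun j : Fin n => m % 2 ^ k' j = o' j % 2 ^ k' j)).card
        < ∑ _m ∈ Finset.range (2 ^ K), q := by
      rw [hload, Finset.sum_const, Finset.card_range, smul_eq_mul, mul_comm]
      omega
    obtain ⟨m0, hm0T, hm0⟩ := Finset.exists_lt_of_sum_lt hlt
    refine ⟨i₀.insertNth m0 o', fun m => ?_⟩
    rw [Finset.card_filter, Fin.sum_univ_succAbove _ i₀]
    simp only [Fin.insertNth_apply_same, Fin.insertNth_apply_succAbove]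
    by_cases hc : m % 2 ^ k i₀ = m0 % 2 ^ k i₀
    · rw [if_pos hc]
      have heq : (∑ j : Fin n, if m % 2 ^ k (i₀.succAbove j) = o' j % 2 ^ k (i₀.succAbove j)
            then 1 else 0)
          = (Finset.univ.filter
              (fun j : Fin n => m0 % 2 ^ k' j = o' j % 2 ^ k' j)).card := by
        rw [Finset.card_filter]
        refine Finset.sum_congr rfl fun j _ => ?_
        have hd : (2:ℕ) ^ k' j ∣ 2 ^ K := pow_dvd_pow 2 (hk'le j)
        have : m % 2 ^ k' j = m0 % 2 ^ k' j := by
          rw [← Nat.mod_mod_of_dvd m hd, ← Nat.mod_mod_of_dvd m0 hd, hc]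
        simp only [hk'] at this
        rw [this]
      rw [heq]
      omega
    · rw [if_neg hc, zero_add]
      have := ho' m
      rw [Finset.card_filter] at this
      exact this
end

section
/- Necessity of the average-usage constraint: Let n customers have arbitrary replenishment intervals t : Fin n → ℕ with t_i ≥ 1 for all i, and let q be a natural number. If there exist offsets o : Fin n → ℕ such that for every period m ∈ ℕ the number of customers i with m ≡ o_i (mod t_i) is at most q, then the total average vehicle usage satisfies ∑_{i} 1/t_i ≤ q (as rational numbers). That is, Constraint (26) is a necessary condition for the existence of a cyclic replenishment schedule respecting the fleet size q. -/
open Finset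

lemma card_filter_range_mod (T d r : ℕ) (hd : 0 < d) (hT : d ∣ T) :
    ((Finset.range T).filter (fun m => m % d = r % d)).card = T / d := by
  have h1 : ((Finset.range T).filter (fun m => m % d = r % d)).card
      = T.count (· ≡ r [MOD d]) := by
    rw [Nat.count_eq_card_filter_range]; rfl
  have hceil := Nat.count_modEq_card_eq_ceil T hd r
  obtain ⟨k, rfl⟩ := hT
  have hs : (r % d : ℕ) < d := Nat.mod_lt _ hd
  have hd' : (0:ℚ) < d := by exact_mod_cast hd
  have h2 : ((d * k : ℕ) - ((r % d : ℕ) : ℚ)) / d = (-((r % d : ℕ) : ℚ)) / d + (k : ℤ) := by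
    push_cast; field_simp; ring
  have h3 : ⌈(-((r % d : ℕ) : ℚ)) / d⌉ = 0 := by
    rw [Int.ceil_eq_zero_iff, Set.mem_Ioc]
    have hs' : ((r % d : ℕ) : ℚ) < d := by exact_mod_cast hs
    constructor
    · rw [lt_div_iff₀ hd']; linarith
    · apply div_nonpos_of_nonpos_of_nonneg
      · simp
      · positivity
  rw [h2, Int.ceil_add_intCast, h3, zero_add] at hceil
  rw [h1, Nat.mul_div_cancel_left _ hd]
  exact_mod_cast hceil

/-- Necessity of the average-usage constraint: if there is a cyclic schedule
with offsets `o` such that in every period `m` the number of customers `i`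
with `m ≡ o i [MOD t i]` is at most `q`, then `∑ i, 1 / t i ≤ q` as rationals. -/
theorem average_usage_necessary (n q : ℕ) (t : Fin n → ℕ) (ht : ∀ i, 1 ≤ t i)
    (h : ∃ o : Fin n → ℕ, ∀ m : ℕ,
      (Finset.univ.filter (fun i : Fin n => m % t i = o i % t i)).card ≤ q) :
    ∑ i : Fin n, (1 : ℚ) / t i ≤ (q : ℚ) := by
  obtain ⟨o, ho⟩ := h
  set T : ℕ := ∏ i, t i with hTdef
  have hTpos : 0 < T := Finset.prod_pos fun i _ => ht i
  have hdvd : ∀ i, t i ∣ T := fun i => Finset.dvd_prod_of_mem t (mem_univ i)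
  -- double counting over one full cycle
  have key : ∑ i : Fin n, T / t i ≤ q * T := by
    calc ∑ i : Fin n, T / t i
        = ∑ i : Fin n,
            ((Finset.range T).filter (fun m => m % t i = o i % t i)).card := by
          refine Finset.sum_congr rfl fun i _ => ?_
          exact (card_filter_range_mod T (t i) (o i) (ht i) (hdvd i)).symm
      _ = ∑ m ∈ Finset.range T,
            (Finset.univ.filter (fun i : Fin n => m % t i = o i % t i)).card := by
          simp_rw [Finset.card_filter]
          exact Finset.sum_comm
      _ ≤ ∑ m ∈ Finset.range T, q := Finset.sum_le_sum fun m _ => ho m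
      _ = q * T := by simp [mul_comm]
  have hTQ : (0:ℚ) < (T:ℚ) := by exact_mod_cast hTpos
  have hcast : ∀ i : Fin n, (1 : ℚ) / t i = ((T / t i : ℕ) : ℚ) / (T : ℚ) := by
    intro i
    have hti : (t i : ℚ) ≠ 0 := by
      have := ht i; positivity
    rw [Nat.cast_div (hdvd i) hti]
    field_simp
  calc ∑ i : Fin n, (1 : ℚ) / t i
      = (∑ i : Fin n, ((T / t i : ℕ) : ℚ)) / (T : ℚ) := by
        rw [Finset.sum_div]; exact Finset.sum_congr rfl fun i _ => hcast i
    _ ≤ ((q * T : ℕ) : ℚ) / (T : ℚ) := by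
        exact div_le_div_of_nonneg_right (by exact_mod_cast key) hTQ.le |>.trans_eq rfl
    _ = q := by
        push_cast
        field_simp
end

section
/- Failure of the average-usage constraint for non-power-of-two intervals (the paper's counterexample): For three customers with intervals t_1 = 1, t_2 = 2, t_3 = 3 and fleet size q = 2, the average-usage constraint ∑_{i=1}^{3} 1/t_i = 1 + 1/2 + 1/3 = 11/6 ≤ 2 is satisfied, yet there exist NO offsets o : Fin 3 → ℕ such that for every period m ∈ ℕ the number of customers i with m ≡ o_i (mod t_i) is at most 2. Hence no cyclic schedule for these intervals respects the fleet of q = 2 vehicles, even though Constraint (26) holds. -/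
/-- The paper's counterexample: for intervals `t = (1, 2, 3)` and fleet size
`q = 2`, the average-usage constraint `1 + 1/2 + 1/3 = 11/6 ≤ 2` holds, yet no
choice of offsets yields a cyclic schedule dispatching at most `2` vehicles in
every period. -/
theorem average_usage_not_sufficient :
    ((1 : ℚ) / 1 + 1 / 2 + 1 / 3 ≤ 2) ∧
    ¬ ∃ o : Fin 3 → ℕ, ∀ m : ℕ,
      (Finset.univ.filter
        (fun i : Fin 3 => m % (![1, 2, 3] i) = o i % (![1, 2, 3] i))).card ≤ 2 := by
  constructor
  · norm_num
  · rintro ⟨o, h⟩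
    have h3 := h (3 * o 1 + 4 * o 2)
    have hfull : (Finset.univ.filter
        (fun i : Fin 3 => (3 * o 1 + 4 * o 2) % (![1, 2, 3] i)
          = o i % (![1, 2, 3] i))) = Finset.univ := by
      apply Finset.filter_true_of_mem
      intro i _
      fin_cases i <;> simp <;> omega
    rw [hfull] at h3
    simp at h3
end
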